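/- arXiv:2504.11107 — 2 statements merged into one kernel-verified Lean document; each statement's English description precedes it below -/
import Mathlib

section
/- For every B > 0 there exists a constant C > 0 such that for all δ ∈ (0,1], ∑_{n=1}^∞ exp(−B·(log₊ n)^{3/2}/√δ) ≤ C·δ^{1/3}. -/
/-!
Write `L n = log₊ (n + 1) ≥ 1`. Since also `√δ ≤ 1`, one half of the exponent `B L^{3/2} / √δ`
is at least `B / (2√δ)` and the other half at least `(B/2) L^{3/2}`. Hence the series is at most
`exp (-B / (2√δ))` times the `δ`-independent series `∑ exp (-(B/2) L^{3/2})`, which converges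
because `(B/2) L^{3/2}` exceeds `2 log (n + 1)` up to an additive constant. Finally
`exp (-x) ≤ 1/x` gives `exp (-B / (2√δ)) ≤ (2/B) √δ ≤ (2/B) δ^{1/3}`.
-/

open Real

theorem exists_mul_le_mul_rpow_add {a c p : ℝ} (ha : 0 ≤ a) (hc : 0 < c) (hp : 1 < p) :
    ∃ K, ∀ x, 0 ≤ x → a * x ≤ c * x ^ p + K := by
  set T := (a / c) ^ (p - 1)⁻¹
  refine ⟨a * T, fun x hx => ?_⟩
  rcases le_total x T with hxT | hTx
  · have : 0 ≤ c * x ^ p := by positivity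
    nlinarith
  · have hpow : a / c ≤ x ^ (p - 1) :=
      calc a / c = T ^ (p - 1) := (rpow_inv_rpow (by positivity) (by linarith)).symm
        _ ≤ x ^ (p - 1) := by gcongr
    have hsplit : x ^ p = x * x ^ (p - 1) := by
      rw [← rpow_one_add' hx (by linarith)]; ring_nf
    have : a * x ≤ c * x ^ p :=
      calc a * x = c * (x * (a / c)) := by field_simp
        _ ≤ c * x ^ p := by rw [hsplit]; gcongr
    nlinarith [mul_nonneg ha (show 0 ≤ T by positivity)]

theorem one_le_log_max_exp_one (x : ℝ) : 1 ≤ log (max x (exp 1)) := by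
  simpa using log_le_log (exp_pos 1) (le_max_right x (exp 1))

theorem log_le_log_max_exp_one {x : ℝ} (hx : 0 < x) : log x ≤ log (max x (exp 1)) :=
  log_le_log hx (le_max_left _ _)

theorem summable_exp_neg_mul_log_max_exp_one_rpow {c p : ℝ} (hc : 0 < c) (hp : 1 < p) :
    Summable fun n : ℕ => exp (-(c * log (max ((n : ℝ) + 1) (exp 1)) ^ p)) := by
  obtain ⟨K, hK⟩ := exists_mul_le_mul_rpow_add zero_le_two hc hp
  have hinv : Summable fun n : ℕ => (((n + 1 : ℕ) : ℝ) ^ 2)⁻¹ :=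
    (summable_nat_add_iff 1).mpr (summable_nat_pow_inv.mpr one_lt_two)
  refine (hinv.mul_left (exp K)).of_nonneg_of_le (fun _ => (exp_pos _).le) fun n => ?_
  have hn : (0 : ℝ) < n + 1 := by positivity
  have hL := hK _ (zero_le_one.trans (one_le_log_max_exp_one ((n : ℝ) + 1)))
  have hlog := log_le_log_max_exp_one hn
  calc exp (-(c * log (max ((n : ℝ) + 1) (exp 1)) ^ p))
      ≤ exp (K - log (((n : ℝ) + 1) ^ 2)) := by
        rw [log_pow]; gcongr; push_cast; linarith
    _ = exp K * (((n + 1 : ℕ) : ℝ) ^ 2)⁻¹ := by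
        rw [exp_sub, exp_log (by positivity), div_eq_mul_inv]; push_cast; rfl

theorem exp_neg_mul_div_le {B y s : ℝ} (hB : 0 ≤ B) (hy : 1 ≤ y) (hs : 0 < s)
    (hs1 : s ≤ 1) :
    exp (-(B * y / s)) ≤ exp (-(B / 2 / s)) * exp (-(B / 2 * y)) := by
  rw [← exp_add]
  gcongr
  have hu : 1 ≤ s⁻¹ := (one_le_inv₀ hs).mpr hs1
  simp only [div_eq_mul_inv]
  nlinarith [mul_nonneg hB (mul_nonneg (sub_nonneg.2 hy) (sub_nonneg.2 hu)),
    mul_nonneg hB (sub_nonneg.2 (one_le_mul_of_one_le_of_one_le hy hu))]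

theorem exp_neg_le_inv {x : ℝ} (hx : 0 < x) : exp (-x) ≤ x⁻¹ := by
  rw [exp_neg]
  exact inv_anti₀ hx (by linarith [add_one_le_exp x])

theorem tsum_exp_neg_mul_log_max_exp_one_rpow_div_le {B p s : ℝ} (hB : 0 < B) (hp : 1 < p)
    (hs : 0 < s) (hs1 : s ≤ 1) :
    ∑' n : ℕ, exp (-(B * log (max ((n : ℝ) + 1) (exp 1)) ^ p / s))
      ≤ exp (-(B / 2 / s)) *
          ∑' n : ℕ, exp (-(B / 2 * log (max ((n : ℝ) + 1) (exp 1)) ^ p)) := by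
  have hsum := summable_exp_neg_mul_log_max_exp_one_rpow (half_pos hB) hp
  have hle : ∀ n : ℕ, exp (-(B * log (max ((n : ℝ) + 1) (exp 1)) ^ p / s))
      ≤ exp (-(B / 2 / s)) * exp (-(B / 2 * log (max ((n : ℝ) + 1) (exp 1)) ^ p)) := fun n =>
    exp_neg_mul_div_le hB.le (one_le_rpow (one_le_log_max_exp_one _) (by linarith)) hs hs1
  rw [← tsum_mul_left]
  exact (hsum.mul_left _).of_nonneg_of_le (fun _ => (exp_pos _).le) hle |>.tsum_le_tsum hle
    (hsum.mul_left _)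

/-- For every `B > 0` there is `C > 0` such that for all `δ ∈ (0,1]`,
`∑_{n=1}^∞ exp(−B (log₊ n)^{3/2} / √δ) ≤ C δ^{1/3}`. -/
theorem stmt_7 (B : ℝ) (hB : 0 < B) :
    ∃ C : ℝ, 0 < C ∧ ∀ δ : ℝ, δ ∈ Set.Ioc (0:ℝ) 1 →
      ∑' n : ℕ,
          Real.exp (-(B * Real.log (max ((n : ℝ) + 1) (Real.exp 1)) ^ ((3:ℝ)/2)
            / Real.sqrt δ))
        ≤ C * δ ^ ((1:ℝ)/3) := by
  set S := ∑' n : ℕ, exp (-(B / 2 * log (max ((n : ℝ) + 1) (exp 1)) ^ ((3:ℝ)/2)))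
  have hS : 0 < S :=
    (summable_exp_neg_mul_log_max_exp_one_rpow (half_pos hB) (by norm_num)).tsum_pos
      (fun _ => (exp_pos _).le) 0 (exp_pos _)
  refine ⟨2 / B * S, by positivity, fun δ ⟨hδ0, hδ1⟩ => ?_⟩
  have hs : 0 < √δ := sqrt_pos.mpr hδ0
  have hs1 : √δ ≤ 1 := sqrt_le_one.mpr hδ1
  calc _ ≤ exp (-(B / 2 / √δ)) * S :=
        tsum_exp_neg_mul_log_max_exp_one_rpow_div_le hB (by norm_num) hs hs1
    _ ≤ 2 / B * √δ * S := by
        gcongr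
        exact (exp_neg_le_inv (by positivity)).trans_eq (by field_simp)
    _ ≤ 2 / B * δ ^ ((1:ℝ)/3) * S := by
        gcongr
        rw [sqrt_eq_rpow]
        exact rpow_le_rpow_of_exponent_ge hδ0 hδ1 (by norm_num)
    _ = 2 / B * S * δ ^ ((1:ℝ)/3) := by ring
end

section
/- Let k ≥ 2 be a real number. For any measurable p : (0,T] → ℝ with p_t ≥ 0, ∫ p_t = 1 over the torus 𝕋, and sup-bound ‖p_t‖_∞ ≤ 2(t^{−1/2} ∨ 1), one has for any φ ∈ L^k([0,T]×𝕋) that the convolution J_φ(t,x) = ∫_0^t ∫_𝕋 p_{t−s}(x−y) φ(s,y) dy ds satisfies ‖J_φ‖_{C([0,T]×𝕋)} ≤ 3 ‖φ‖_{L^k([0,T]×𝕋)} · (T^{(2k−3)/(2k)} ∨ T). -/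
/-!
Hölder's inequality on `(0, t] × 𝕋` with exponents `k' = k / (k - 1)` and `k` bounds `|J_φ(t, x)|`
by `‖p_{t-·}(x - ·)‖_{L^{k'}} ‖φ‖_{L^k}`. A probability density `p_u` bounded by
`M_u = 2 (u^{-1/2} ∨ 1)` satisfies `∫ p_u^{k'} ≤ M_u^{k'-1}`, and since `k' - 1 = 1/(k - 1) ≤ 1`
this is at most `2^{k'-1} (u^{-1/(2(k-1))} + 1)`, which is integrable at `u = 0`. Integrating over
`u ∈ (0, t]` and taking the `1/k'`-th power produces the factor `3 (T^{(2k-3)/(2k)} ∨ T)`.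
-/

open MeasureTheory Set Function
open scoped ENNReal

instance : Fact ((0:ℝ) < 2) := ⟨by norm_num⟩

theorem ENNReal.lintegral_rpow_le_of_le {α : Type*} [MeasurableSpace α] {μ : Measure α}
    {f : α → ℝ≥0∞} (hf : AEMeasurable f μ) {M : ℝ≥0∞} (hfM : ∀ a, f a ≤ M) {q : ℝ}
    (hq : 1 ≤ q) : ∫⁻ a, f a ^ q ∂μ ≤ M ^ (q - 1) * ∫⁻ a, f a ∂μ := by
  have hsplit (x : ℝ≥0∞) : x ^ q = x ^ (q - 1) * x := by
    simpa using ENNReal.rpow_add_of_nonneg (x := x) (q - 1) 1 (by linarith) zero_le_one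
  calc ∫⁻ a, f a ^ q ∂μ ≤ ∫⁻ a, M ^ (q - 1) * f a ∂μ := by
        refine lintegral_mono fun a => ?_
        rw [hsplit]
        gcongr
        exact hfM a
    _ = M ^ (q - 1) * ∫⁻ a, f a ∂μ := lintegral_const_mul'' _ hf

theorem lintegral_enorm_sub_left_rpow_le {G : Type*} [MeasurableSpace G] [AddGroup G]
    [MeasurableAdd G] [MeasurableNeg G] {ν : Measure G} [ν.IsAddLeftInvariant] [ν.IsNegInvariant]
    {f : G → ℝ} (hf0 : ∀ y, 0 ≤ f y) (hf1 : ∫ y, f y ∂ν = 1) {M : ℝ} (hfM : ∀ y, f y ≤ M)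
    {q : ℝ} (hq : 1 ≤ q) (x : G) :
    ∫⁻ y, ‖f (x - y)‖ₑ ^ q ∂ν ≤ ENNReal.ofReal M ^ (q - 1) := by
  have hint : Integrable f ν := Integrable.of_integral_ne_zero (by simp [hf1])
  have hmass : ∫⁻ y, ‖f y‖ₑ ∂ν = 1 := by
    rw [← ofReal_integral_norm_eq_lintegral_enorm hint]
    simp [Real.norm_of_nonneg (hf0 _), hf1]
  calc ∫⁻ y, ‖f (x - y)‖ₑ ^ q ∂ν = ∫⁻ y, ‖f y‖ₑ ^ q ∂ν :=
        lintegral_sub_left_eq_self (fun y => ‖f y‖ₑ ^ q) x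
    _ ≤ ENNReal.ofReal M ^ (q - 1) * ∫⁻ y, ‖f y‖ₑ ∂ν :=
        ENNReal.lintegral_rpow_le_of_le hint.aemeasurable.enorm
          (fun y => by rw [Real.enorm_eq_ofReal (hf0 y)]; exact ENNReal.ofReal_le_ofReal (hfM y)) hq
    _ = ENNReal.ofReal M ^ (q - 1) := by rw [hmass, mul_one]

theorem two_mul_max_rpow_neg_half_one_rpow_le {u b : ℝ} (hu : 0 ≤ u) :
    (2 * max (u ^ (-(1:ℝ)/2)) 1) ^ b ≤ 2 ^ b * (u ^ (-(b/2)) + 1) := by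
  have hmax : max (u ^ (-(1:ℝ)/2)) 1 ^ b ≤ u ^ (-(b/2)) + 1 := by
    rcases max_choice (u ^ (-(1:ℝ)/2)) 1 with h | h <;> rw [h]
    · rw [← Real.rpow_mul hu, show -(1:ℝ)/2 * b = -(b/2) by ring]
      linarith
    · rw [Real.one_rpow]
      linarith [Real.rpow_nonneg hu (-(b/2))]
  rw [Real.mul_rpow zero_le_two (le_max_of_le_right zero_le_one)]
  gcongr

theorem lintegral_Ioc_ofReal_sub_rpow_neg_add_one {a t : ℝ} (ha : a < 1) (ht : 0 ≤ t) :
    ∫⁻ s in Ioc 0 t, ENNReal.ofReal ((t - s) ^ (-a) + 1)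
      = ENNReal.ofReal (t ^ (1 - a) / (1 - a) + t) := by
  have hsing : IntervalIntegrable (fun s => (t - s) ^ (-a)) volume 0 t := by
    simpa using ((intervalIntegral.intervalIntegrable_rpow' (a := 0) (b := t)
      (by linarith : -1 < -a)).comp_sub_left t).symm
  have hint : IntegrableOn (fun s => (t - s) ^ (-a) + 1) (Ioc 0 t) :=
    (intervalIntegrable_iff_integrableOn_Ioc_of_le ht).1 (hsing.add intervalIntegrable_const)
  rw [← ofReal_integral_eq_lintegral_ofReal hint (ae_restrict_of_forall_mem measurableSet_Ioc
    fun s hs => by positivity [Real.rpow_nonneg (sub_nonneg.2 hs.2) (-a)])]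
  congr 1
  rw [← intervalIntegral.integral_of_le ht, intervalIntegral.integral_add hsing
    intervalIntegrable_const, intervalIntegral.integral_comp_sub_left (fun u => u ^ (-a)) t,
    sub_zero, sub_self, integral_rpow (Or.inl (by linarith)), Real.zero_rpow (by linarith)]
  simp only [sub_zero, intervalIntegral.integral_const, smul_eq_mul, mul_one, neg_add_eq_sub]

theorem lintegral_Ioc_prod_enorm_kernel_rpow_le {G : Type*} [MeasurableSpace G] [AddGroup G]
    [MeasurableAdd₂ G] [MeasurableNeg G] {ν : Measure G} [SFinite ν] [ν.IsAddLeftInvariant]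
    [ν.IsNegInvariant] {T t b : ℝ} (hb0 : 0 ≤ b) (hb1 : b ≤ 1) (ht : 0 ≤ t) (htT : t ≤ T)
    {p : ℝ → G → ℝ} (hp_meas : Measurable (uncurry p))
    (hp_nonneg : ∀ u ∈ Ioc (0:ℝ) T, ∀ a, 0 ≤ p u a)
    (hp_int : ∀ u ∈ Ioc (0:ℝ) T, ∫ a, p u a ∂ν = 1)
    (hp_sup : ∀ u ∈ Ioc (0:ℝ) T, ∀ a, p u a ≤ 2 * max (u ^ (-(1:ℝ)/2)) 1) (x : G) :
    ∫⁻ z, ‖p (t - z.1) (x - z.2)‖ₑ ^ (1 + b) ∂((volume.restrict (Ioc 0 t)).prod ν)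
      ≤ ENNReal.ofReal (2 ^ b * (2 * t ^ (1 - b/2) + t)) := by
  have hmeas : Measurable fun z : ℝ × G => ‖p (t - z.1) (x - z.2)‖ₑ ^ (1 + b) :=
    (hp_meas.comp ((measurable_const.sub measurable_fst).prodMk
      (measurable_const.sub measurable_snd))).enorm.pow_const _
  rw [lintegral_prod _ hmeas.aemeasurable]
  calc ∫⁻ s in Ioc 0 t, ∫⁻ y, ‖p (t - s) (x - y)‖ₑ ^ (1 + b) ∂ν
      ≤ ∫⁻ s in Ioc 0 t, ENNReal.ofReal (2 ^ b) * ENNReal.ofReal ((t - s) ^ (-(b/2)) + 1) := by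
        refine lintegral_mono_ae ?_
        -- `s = t` has to be discarded: nothing is assumed about `p 0`
        rw [Measure.restrict_congr_set Ioo_ae_eq_Ioc.symm]
        filter_upwards [ae_restrict_mem measurableSet_Ioo] with s ⟨hs0, hst⟩
        have hu : t - s ∈ Ioc 0 T := ⟨by linarith, by linarith⟩
        calc ∫⁻ y, ‖p (t - s) (x - y)‖ₑ ^ (1 + b) ∂ν
            ≤ ENNReal.ofReal (2 * max ((t - s) ^ (-(1:ℝ)/2)) 1) ^ (1 + b - 1) :=
              lintegral_enorm_sub_left_rpow_le (hp_nonneg _ hu) (hp_int _ hu) (hp_sup _ hu)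
                (by linarith) x
          _ ≤ ENNReal.ofReal (2 ^ b) * ENNReal.ofReal ((t - s) ^ (-(b/2)) + 1) := by
              rw [add_sub_cancel_left, ENNReal.ofReal_rpow_of_nonneg (by positivity) hb0,
                ← ENNReal.ofReal_mul (by positivity)]
              exact ENNReal.ofReal_le_ofReal
                (two_mul_max_rpow_neg_half_one_rpow_le (sub_nonneg.2 hst.le))
    _ = ENNReal.ofReal (2 ^ b * (t ^ (1 - b/2) / (1 - b/2) + t)) := by
        rw [lintegral_const_mul' _ _ ENNReal.ofReal_ne_top,
          lintegral_Ioc_ofReal_sub_rpow_neg_add_one (by linarith) ht,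
          ENNReal.ofReal_mul (by positivity)]
    _ ≤ ENNReal.ofReal (2 ^ b * (2 * t ^ (1 - b/2) + t)) := by
        gcongr
        rw [div_le_iff₀ (by linarith)]
        nlinarith [Real.rpow_nonneg ht (1 - b/2)]

theorem MeasureTheory.Measure.prod_restrict_mono_left {α β : Type*} [MeasurableSpace α] [MeasurableSpace β]
    (μ : Measure α) (ν : Measure β) [SFinite μ] [SFinite ν] {s s' : Set α} (hss' : s ⊆ s') :
    (μ.restrict s).prod ν ≤ (μ.restrict s').prod ν := by
  rw [← ν.restrict_univ, Measure.prod_restrict, Measure.prod_restrict]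
  exact Measure.restrict_mono (Set.prod_mono hss' subset_rfl) le_rfl

theorem lintegral_prod_enorm_rpow_eq_ofReal_integral_integral {α β : Type*} [MeasurableSpace α]
    [MeasurableSpace β] {μ : Measure α} {ν : Measure β} [SFinite μ] [SFinite ν] {k : ℝ}
    (hk : 0 < k) {F : α → β → ℝ} (hF : MemLp (uncurry F) (ENNReal.ofReal k) (μ.prod ν)) :
    ∫⁻ z, ‖uncurry F z‖ₑ ^ k ∂(μ.prod ν) = ENNReal.ofReal (∫ a, ∫ b, |F a b| ^ k ∂ν ∂μ) := by
  have hint : Integrable (fun z => |uncurry F z| ^ k) (μ.prod ν) := by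
    simpa [ENNReal.toReal_ofReal hk.le] using
      hF.integrable_norm_rpow (by simpa using hk) ENNReal.ofReal_ne_top
  have hprod : ∫ z, |uncurry F z| ^ k ∂(μ.prod ν) = ∫ a, ∫ b, |F a b| ^ k ∂ν ∂μ :=
    integral_prod _ hint
  rw [← hprod, ofReal_integral_eq_lintegral_ofReal hint
    (ae_of_all _ fun z => by positivity)]
  refine lintegral_congr fun z => ?_
  rw [← Real.enorm_abs, Real.enorm_eq_ofReal (abs_nonneg _),
    ENNReal.ofReal_rpow_of_nonneg (abs_nonneg _) hk.le]

theorem abs_integral_integral_mul_le_of_lintegral_rpow_le {α β : Type*} [MeasurableSpace α]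
    [MeasurableSpace β] {μ : Measure α} {ν : Measure β} [SFinite μ] [SFinite ν] {p q : ℝ}
    (hpq : p.HolderConjugate q) {f g : α × β → ℝ} (hf : AEStronglyMeasurable f (μ.prod ν))
    (hg : AEStronglyMeasurable g (μ.prod ν)) {A B : ℝ} (hA0 : 0 ≤ A) (hB0 : 0 ≤ B)
    (hA : ∫⁻ z, ‖f z‖ₑ ^ p ∂(μ.prod ν) ≤ ENNReal.ofReal A)
    (hB : ∫⁻ z, ‖g z‖ₑ ^ q ∂(μ.prod ν) ≤ ENNReal.ofReal B) :
    |∫ a, ∫ b, f (a, b) * g (a, b) ∂ν ∂μ| ≤ A ^ (1/p) * B ^ (1/q) := by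
  have hfg : ∫⁻ z, ‖f z * g z‖ₑ ∂(μ.prod ν) ≤ ENNReal.ofReal (A ^ (1/p) * B ^ (1/q)) :=
    calc ∫⁻ z, ‖f z * g z‖ₑ ∂(μ.prod ν) = ∫⁻ z, ((‖f ·‖ₑ) * (‖g ·‖ₑ)) z ∂(μ.prod ν) := by
          simp only [enorm_mul, Pi.mul_apply]
      _ ≤ (∫⁻ z, ‖f z‖ₑ ^ p ∂(μ.prod ν)) ^ (1/p) * (∫⁻ z, ‖g z‖ₑ ^ q ∂(μ.prod ν)) ^ (1/q) :=
          ENNReal.lintegral_mul_le_Lp_mul_Lq _ hpq hf.enorm hg.enorm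
      _ ≤ ENNReal.ofReal A ^ (1/p) * ENNReal.ofReal B ^ (1/q) := by
          gcongr
          exacts [hpq.one_div_nonneg, hpq.symm.one_div_nonneg]
      _ = ENNReal.ofReal (A ^ (1/p) * B ^ (1/q)) := by
          rw [ENNReal.ofReal_rpow_of_nonneg hA0 hpq.one_div_nonneg,
            ENNReal.ofReal_rpow_of_nonneg hB0 hpq.symm.one_div_nonneg,
            ENNReal.ofReal_mul (by positivity)]
  have hint : Integrable (fun z => f z * g z) (μ.prod ν) :=
    ⟨hf.mul hg, hfg.trans_lt ENNReal.ofReal_lt_top⟩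
  rw [← integral_prod _ hint, ← Real.norm_eq_abs]
  calc ‖∫ z, f z * g z ∂(μ.prod ν)‖ ≤ (∫⁻ z, ‖f z * g z‖ₑ ∂(μ.prod ν)).toReal :=
        (norm_integral_le_integral_norm _).trans_eq (integral_norm_eq_lintegral_enorm hint.1)
    _ ≤ A ^ (1/p) * B ^ (1/q) := ENNReal.toReal_le_of_le_ofReal (by positivity) hfg

theorem rpow_le_max_rpow_self {T e₀ e : ℝ} (hT : 0 ≤ T) (he₀ : 0 ≤ e₀) (he₀e : e₀ ≤ e)
    (he : e ≤ 1) : T ^ e ≤ max (T ^ e₀) T := by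
  rcases le_total T 1 with h | h
  · exact (Real.rpow_le_rpow_of_exponent_ge' hT h he₀ he₀e).trans (le_max_left _ _)
  · calc T ^ e ≤ T ^ (1:ℝ) := Real.rpow_le_rpow_of_exponent_le h he
      _ ≤ max (T ^ e₀) T := by rw [Real.rpow_one]; exact le_max_right _ _

theorem two_rpow_mul_rpow_le_three_mul_max {b t T : ℝ} (hb0 : 0 ≤ b) (hb1 : b ≤ 1) (ht : 0 ≤ t)
    (htT : t ≤ T) :
    (2 ^ b * (2 * t ^ (1 - b/2) + t)) ^ (1 / (1 + b))
      ≤ 3 * max (T ^ ((1 - b/2) / (1 + b))) T := by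
  set m := max (t ^ (1 - b/2)) t
  have hm0 : 0 ≤ m := le_max_of_le_right ht
  have hle : 2 ^ b * (2 * t ^ (1 - b/2) + t) ≤ 3 ^ (1 + b) * m := by
    calc 2 ^ b * (2 * t ^ (1 - b/2) + t) ≤ 3 ^ b * (3 * m) := by
          gcongr
          · norm_num
          · linarith [le_max_left (t ^ (1 - b/2)) t, le_max_right (t ^ (1 - b/2)) t]
      _ = 3 ^ (1 + b) * m := by rw [Real.rpow_add three_pos, Real.rpow_one]; ring
  have hexp : 0 ≤ (1 - b/2) / (1 + b) := by apply div_nonneg <;> linarith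
  have hm : m ^ (1 / (1 + b)) ≤ max (T ^ ((1 - b/2) / (1 + b))) T := by
    rcases max_choice (t ^ (1 - b/2)) t with h | h <;> simp only [m, h]
    · rw [← Real.rpow_mul ht, mul_one_div]
      exact (Real.rpow_le_rpow ht htT hexp).trans (le_max_left _ _)
    · exact (Real.rpow_le_rpow ht htT (by positivity)).trans
        (rpow_le_max_rpow_self (ht.trans htT) hexp (by gcongr; linarith)
          (by rw [div_le_one] <;> linarith))
  calc (2 ^ b * (2 * t ^ (1 - b/2) + t)) ^ (1 / (1 + b))
      ≤ (3 ^ (1 + b) * m) ^ (1 / (1 + b)) := by gcongr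
    _ = 3 * m ^ (1 / (1 + b)) := by
        rw [Real.mul_rpow (by positivity) hm0, ← Real.rpow_mul (by norm_num),
          mul_one_div_cancel (by linarith), Real.rpow_one]
    _ ≤ 3 * max (T ^ ((1 - b/2) / (1 + b))) T := by gcongr

theorem stmt_10_general (k T : ℝ) (hk : 2 ≤ k)
    (p : ℝ → AddCircle (2:ℝ) → ℝ)
    (hp_meas : Measurable (Function.uncurry p))
    (hp_nonneg : ∀ t ∈ Set.Ioc (0:ℝ) T, ∀ a, 0 ≤ p t a)
    (hp_int : ∀ t ∈ Set.Ioc (0:ℝ) T, ∫ a, p t a = 1)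
    (hp_sup : ∀ t ∈ Set.Ioc (0:ℝ) T, ∀ a, p t a ≤ 2 * max (t ^ (-(1:ℝ)/2)) 1)
    (φ : ℝ → AddCircle (2:ℝ) → ℝ)
    (hφ : MeasureTheory.MemLp (Function.uncurry φ) (ENNReal.ofReal k)
      ((volume.restrict (Set.Icc (0:ℝ) T)).prod volume)) :
    ∀ t ∈ Set.Icc (0:ℝ) T, ∀ x : AddCircle (2:ℝ),
      |∫ s in Set.Ioc (0:ℝ) t, ∫ y, p (t - s) (x - y) * φ s y|
        ≤ 3 * (∫ s in Set.Icc (0:ℝ) T, ∫ y, |φ s y| ^ k) ^ (1/k)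
            * max (T ^ ((2*k - 3)/(2*k))) T := by
  rintro t ⟨ht0, htT⟩ x
  have hk0 : 0 < k := by linarith
  have hk1 : 0 < k - 1 := by linarith
  set b := 1 / (k - 1) with hb
  have hb0 : 0 ≤ b := by positivity
  have hb1 : b ≤ 1 := by rw [hb, div_le_one hk1]; linarith
  have hconj : (1 + b).HolderConjugate k := by
    rw [hb, one_add_div hk1.ne', sub_add_cancel]
    exact (Real.HolderConjugate.conjExponent (by linarith)).symm
  have hmono := Measure.prod_restrict_mono_left volume (volume : Measure (AddCircle (2:ℝ)))
    (Ioc_subset_Icc_self.trans (Icc_subset_Icc_right htT) : Ioc 0 t ⊆ Icc 0 T)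
  have hkernel := lintegral_Ioc_prod_enorm_kernel_rpow_le hb0 hb1 ht0 htT hp_meas hp_nonneg
    hp_int hp_sup x
  have hφt := (lintegral_mono' hmono le_rfl).trans
    (lintegral_prod_enorm_rpow_eq_ofReal_integral_integral hk0 hφ).le
  calc |∫ s in Ioc 0 t, ∫ y, p (t - s) (x - y) * φ s y|
      ≤ (2 ^ b * (2 * t ^ (1 - b/2) + t)) ^ (1 / (1 + b))
          * (∫ s in Icc 0 T, ∫ y, |φ s y| ^ k) ^ (1/k) :=
        abs_integral_integral_mul_le_of_lintegral_rpow_le hconj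
          (hp_meas.comp ((measurable_const.sub measurable_fst).prodMk
            (measurable_const.sub measurable_snd))).aestronglyMeasurable
          (hφ.1.mono_measure hmono) (by positivity) (by positivity) hkernel hφt
    _ ≤ 3 * max (T ^ ((1 - b/2) / (1 + b))) T * (∫ s in Icc 0 T, ∫ y, |φ s y| ^ k) ^ (1/k) := by
        gcongr
        exact two_rpow_mul_rpow_le_three_mul_max hb0 hb1 ht0 htT
    _ = 3 * (∫ s in Icc 0 T, ∫ y, |φ s y| ^ k) ^ (1/k) * max (T ^ ((2*k - 3)/(2*k))) T := by
        rw [show (1 - b/2) / (1 + b) = (2*k - 3)/(2*k) by rw [hb]; field_simp; ring]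
        ring

/-- Young-type bound: for a nonnegative probability kernel `p_t` on the torus
`𝕋 = ℝ/2ℤ` with `‖p_t‖_∞ ≤ 2(t^{−1/2} ∨ 1)`, and `φ ∈ L^k([0,T]×𝕋)` with
`k ≥ 2`, the convolution `J_φ(t,x) = ∫_0^t ∫_𝕋 p_{t−s}(x−y) φ(s,y) dy ds`
satisfies `‖J_φ‖_{C([0,T]×𝕋)} ≤ 3 ‖φ‖_{L^k} (T^{(2k−3)/(2k)} ∨ T)`. -/
theorem stmt_10 (k T : ℝ) (hk : 2 ≤ k) (hT : 0 < T)
    (p : ℝ → AddCircle (2:ℝ) → ℝ)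
    (hp_meas : Measurable (Function.uncurry p))
    (hp_nonneg : ∀ t ∈ Set.Ioc (0:ℝ) T, ∀ a, 0 ≤ p t a)
    (hp_int : ∀ t ∈ Set.Ioc (0:ℝ) T, ∫ a, p t a = 1)
    (hp_sup : ∀ t ∈ Set.Ioc (0:ℝ) T, ∀ a, p t a ≤ 2 * max (t ^ (-(1:ℝ)/2)) 1)
    (φ : ℝ → AddCircle (2:ℝ) → ℝ)
    (hφ_meas : Measurable (Function.uncurry φ))
    (hφ : MeasureTheory.MemLp (Function.uncurry φ) (ENNReal.ofReal k)
      ((volume.restrict (Set.Icc (0:ℝ) T)).prod volume)) :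
    ∀ t ∈ Set.Icc (0:ℝ) T, ∀ x : AddCircle (2:ℝ),
      |∫ s in Set.Ioc (0:ℝ) t, ∫ y, p (t - s) (x - y) * φ s y|
        ≤ 3 * (∫ s in Set.Icc (0:ℝ) T, ∫ y, |φ s y| ^ k) ^ (1/k)
            * max (T ^ ((2*k - 3)/(2*k))) T :=
  stmt_10_general k T hk p hp_meas hp_nonneg hp_int hp_sup φ hφ
end
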